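/- Let τ : H_v → A_v be the A_v-linear map with τ(T_x) = δ_{x,1}. Then τ(T_x T_y) = δ_{x, y^{-1}} for all x, y ∈ WH_b. Consequently τ is a symmetrizing trace form on H_v (τ(hh') = τ(h'h) and the bilinear form (h,h') ↦ τ(hh') is non-degenerate), and { T_{y^{-1}} : y ∈ WH_b } is the basis dual to { T_x : x ∈ WH_b }. -/

import Mathlib

noncomputable section

open scoped Pointwise

/-- The general linear group `GL_n(K)`. -/
abbrev GLn (K : Type) [Field K] (n : ℕ) : Type := GL (Fin n) K

/-- `g` is a permutation matrix. -/
def IsPermMat {K : Type} [Field K] {n : ℕ} (g : GLn K n) : Prop :=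
  ∃ σ : Equiv.Perm (Fin n),
    ∀ i j : Fin n, (g : Matrix (Fin n) (Fin n) K) i j = if σ j = i then 1 else 0

/-- `W`, the group of permutation matrices in `GL_n(K)`. -/
def Wset (K : Type) [Field K] (n : ℕ) : Set (GLn K n) := {g | IsPermMat g}

/-- The set `S = {s_1, …, s_{n-1}}` of Coxeter generators of `W`: the matrices of the
adjacent transpositions `(i, i+1)`. -/
def Sset (K : Type) [Field K] (n : ℕ) : Set (GLn K n) :=
  {g | ∃ i j : Fin n, (i : ℕ) + 1 = (j : ℕ) ∧
    ∀ k l : Fin n, (g : Matrix (Fin n) (Fin n) K) k l = if Equiv.swap i j l = k then 1 else 0}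

/-- The set `𝒯 = { w s_i w⁻¹ : w ∈ W, s_i ∈ S }` of reflections of `W`. -/
def Tset (K : Type) [Field K] (n : ℕ) : Set (GLn K n) :=
  {t | ∃ w ∈ Wset K n, ∃ s ∈ Sset K n, t = w * s * w⁻¹}

/-- `H_b`: the group of diagonal matrices whose entries are `b`-th roots of unity
(i.e. entries in `F_b`). -/
def Hbset (K : Type) [Field K] (n b : ℕ) : Set (GLn K n) :=
  {g | (∀ i j : Fin n, i ≠ j → (g : Matrix (Fin n) (Fin n) K) i j = 0) ∧
    ∀ i : Fin n, (g : Matrix (Fin n) (Fin n) K) i i ^ b = 1}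

/-- The group `WH_b`: the set of products `w * d` with `w ∈ W` and `d ∈ H_b`. -/
def WHbset (K : Type) [Field K] (n b : ℕ) : Set (GLn K n) :=
  {x | ∃ w ∈ Wset K n, ∃ d ∈ Hbset K n b, x = w * d}

/-- The length function on monomial matrices: the number of inversions of the underlying
permutation.  For `x = w d ∈ WH_b` this is the Coxeter length `ℓ(w)`, i.e. `len` is the
length function of `W` lifted to `WH_b` via `ℓ(wd) = ℓ(dw) = ℓ(w)`. -/
def len {K : Type} [Field K] {n : ℕ} (g : GLn K n) : ℕ :=
  Set.ncard {p : Fin n × Fin n | p.1 < p.2 ∧ ∃ i i' : Fin n, i' < i ∧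
    (g : Matrix (Fin n) (Fin n) K) i p.1 ≠ 0 ∧ (g : Matrix (Fin n) (Fin n) K) i' p.2 ≠ 0}

/-- The diagonal matrix `h_{k,l}(α) = h_k(α) h_l((-1)^{b-1} α⁻¹)`. -/
def hmat (K : Type) [Field K] {n : ℕ} (b : ℕ) (k l : Fin n) (α : K) :
    Matrix (Fin n) (Fin n) K :=
  Matrix.diagonal fun p => if p = k then α else if p = l then (-1 : K) ^ (b - 1) * α⁻¹ else 1

/-- For a reflection `t` interchanging the `k`-th and `l`-th standard basis vectors
(`t = w s_i w⁻¹`), the subset `X_t = { w h_{i,i+1}(α) w⁻¹ : α ∈ F_b } =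
{ h_{k,l}(α) : α^b = 1 }` of `H_b`. -/
def Xset (K : Type) [Field K] (n b : ℕ) (t : GLn K n) : Set (GLn K n) :=
  {d | ∃ k l : Fin n, ∃ α : K, α ^ b = 1 ∧ k ≠ l ∧
    (∀ p q : Fin n, (t : Matrix (Fin n) (Fin n) K) p q = if Equiv.swap k l q = p then 1 else 0) ∧
    (d : Matrix (Fin n) (Fin n) K) = hmat K b k l α}

/-- `X_s = { h_{k,l}(α) : α^b = 1 }` for the simple reflection `s` interchanging the
`k`-th and `l`-th standard basis vectors. -/
def XsPair (K : Type) [Field K] {n : ℕ} (b : ℕ) (k l : Fin n) : Set (GLn K n) :=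
  {d | ∃ α : K, α ^ b = 1 ∧ (d : Matrix (Fin n) (Fin n) K) = hmat K b k l α}

/-- The product `X_1 ⋯ X_r` of a list of subsets of a monoid. -/
def SetProd {G : Type} [Monoid G] : List (Set G) → Set G
  | [] => {1}
  | X :: L => X * SetProd L

/-- `U`: the group of upper triangular unipotent matrices. -/
def Uset (K : Type) [Field K] (n : ℕ) : Set (GLn K n) :=
  {g | (∀ i j : Fin n, j < i → (g : Matrix (Fin n) (Fin n) K) i j = 0) ∧
    ∀ i : Fin n, (g : Matrix (Fin n) (Fin n) K) i i = 1}

/-- `H_a`: the group of diagonal matrices with entries in `F_a` (the `a`-th roots of unity). -/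
def Haset (K : Type) [Field K] (n a : ℕ) : Set (GLn K n) :=
  {g | (∀ i j : Fin n, i ≠ j → (g : Matrix (Fin n) (Fin n) K) i j = 0) ∧
    ∀ i : Fin n, (g : Matrix (Fin n) (Fin n) K) i i ^ a = 1}

/-- `B_a = H_a U`. -/
def Baset (K : Type) [Field K] (n a : ℕ) : Set (GLn K n) :=
  {g | ∃ h ∈ Haset K n a, ∃ u ∈ Uset K n, g = h * u}

/-- `A_v = ℤ[a, v, v⁻¹]`, realized as polynomials in the indeterminate `a` with
coefficients Laurent polynomials in the indeterminate `v`. -/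
abbrev Av : Type := Polynomial (LaurentPolynomial ℤ)

/-- The indeterminate `a` of `A_v`. -/
def aA : Av := Polynomial.X

/-- The indeterminate `v` of `A_v`. -/
def vA : Av := Polynomial.C (LaurentPolynomial.T 1)

/-- `v⁻¹ ∈ A_v`. -/
def vI : Av := Polynomial.C (LaurentPolynomial.T (-1))


/-!
The identity `τ(T_x T_y) = δ_{x,y⁻¹}` is proved by induction on `ℓ(y)`. If `ℓ(y) = 0` then
`y ∈ H_b` and `T_x T_y = T_{xy}`. Otherwise `y = s y'` with `s ∈ S` and `ℓ(y') < ℓ(y)`, so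
`T_x T_y = (T_x T_s) T_{y'}`. If `ℓ(xs) > ℓ(x)` this is `T_{xs} T_{y'}` and induction
applies. If `ℓ(xs) < ℓ(x)` the quadratic relation adds the terms `T_{xd} T_{y'}` with
`d ∈ X_s ⊆ H_b`, and these vanish under `τ`: writing elements of `WH_b` as monomial matrices,
the length is the number of inversions of the underlying permutation, so `xd = y'⁻¹`, i.e.
`y⁻¹ = xds`, would force `ℓ(y') = ℓ(x) > ℓ(xs) = ℓ(y) > ℓ(y')`.

Once `τ(T_x T_y) = δ_{x,y⁻¹}`, the form `(h, h') ↦ τ(h h')` is symmetric on a basis, hence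
symmetric, and `{T_{y⁻¹}}` is the dual basis of `{T_x}`, which gives non-degeneracy.
-/

section DualBasis

variable {R A ι : Type*} [CommSemiring R] [Semiring A] [Algebra R A] [DecidableEq ι]
  (bv : Module.Basis ι R A) (τ : A →ₗ[R] R) {e : ι → ι}

theorem map_mul_comm_of_basis_dual (he : Function.Involutive e)
    (hτ : ∀ i j, τ (bv i * bv j) = if i = e j then 1 else 0) (x y : A) :
    τ (x * y) = τ (y * x) := by
  have hB : (LinearMap.mul R A).compr₂ τ = ((LinearMap.mul R A).compr₂ τ).flip :=
    bv.ext fun i => bv.ext fun j => by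
      simp only [LinearMap.compr₂_apply, LinearMap.flip_apply, LinearMap.mul_apply', hτ]
      exact if_congr (eq_comm.trans he.eq_iff) rfl rfl
  exact LinearMap.congr_fun₂ hB x y

theorem repr_eq_map_mul_of_basis_dual (he : Function.Involutive e)
    (hτ : ∀ i j, τ (bv i * bv j) = if i = e j then 1 else 0) (x : A) (i : ι) :
    bv.repr x i = τ (x * bv (e i)) := by
  have hcoord : bv.coord i = τ ∘ₗ LinearMap.mulRight R (bv (e i)) :=
    bv.ext fun j => by
      simp only [Module.Basis.coord_apply, Module.Basis.repr_self, Finsupp.single_apply,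
        LinearMap.comp_apply, LinearMap.mulRight_apply, hτ, he i, eq_comm]
  exact LinearMap.congr_fun hcoord x

theorem eq_zero_of_map_mul_eq_zero_of_basis_dual (he : Function.Involutive e)
    (hτ : ∀ i j, τ (bv i * bv j) = if i = e j then 1 else 0) {x : A}
    (hx : ∀ y, τ (x * y) = 0) : x = 0 :=
  bv.repr.map_eq_zero_iff.mp <| Finsupp.ext fun i => by
    rw [repr_eq_map_mul_of_basis_dual bv τ he hτ, hx, Finsupp.coe_zero, Pi.zero_apply]

end DualBasis

section Monomial

open Matrix

variable {m R : Type*} [DecidableEq m] [Semiring R]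

def monomialMatrix (σ : Equiv.Perm m) (f : m → R) : Matrix m m R :=
  of fun i j => if i = σ j then f j else 0

theorem monomialMatrix_apply (σ : Equiv.Perm m) (f : m → R) (i j : m) :
    monomialMatrix σ f i j = if i = σ j then f j else 0 := rfl

theorem monomialMatrix_one_left (f : m → R) : monomialMatrix 1 f = diagonal f := by
  ext i j
  by_cases h : i = j <;> simp [monomialMatrix_apply, h]

variable [Fintype m]

theorem monomialMatrix_mul (σ π : Equiv.Perm m) (f g : m → R) :
    monomialMatrix σ f * monomialMatrix π g =
      monomialMatrix (σ * π) fun j => f (π j) * g j := by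
  ext i j
  rw [mul_apply, Finset.sum_eq_single (π j)]
  · by_cases h : i = σ (π j) <;> simp [monomialMatrix_apply, h]
  · intro k _ hk
    simp [monomialMatrix_apply, hk]
  · simp

def monomialUnit (σ : Equiv.Perm m) (f : m → Rˣ) : (Matrix m m R)ˣ where
  val := monomialMatrix σ fun j => f j
  inv := monomialMatrix σ⁻¹ fun j => ↑(f (σ⁻¹ j))⁻¹
  val_inv := by simp [monomialMatrix_mul, monomialMatrix_one_left]
  inv_val := by simp [monomialMatrix_mul, monomialMatrix_one_left]

theorem val_monomialUnit (σ : Equiv.Perm m) (f : m → Rˣ) :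
    (monomialUnit σ f : Matrix m m R) = monomialMatrix σ fun j => (f j : R) := rfl

theorem monomialUnit_mul (σ π : Equiv.Perm m) (f g : m → Rˣ) :
    monomialUnit σ f * monomialUnit π g = monomialUnit (σ * π) fun j => f (π j) * g j :=
  Units.ext <| by simp [val_monomialUnit, monomialMatrix_mul]

theorem monomialUnit_inv (σ : Equiv.Perm m) (f : m → Rˣ) :
    (monomialUnit σ f)⁻¹ = monomialUnit σ⁻¹ fun j => (f (σ⁻¹ j))⁻¹ :=
  Units.ext rfl

end Monomial

namespace Equiv.Perm

variable {n : ℕ}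

def inversions (σ : Perm (Fin n)) : Finset (Fin n × Fin n) :=
  {p | p.1 < p.2 ∧ σ p.2 < σ p.1}

@[simp]
theorem mem_inversions {σ : Perm (Fin n)} {p : Fin n × Fin n} :
    p ∈ σ.inversions ↔ p.1 < p.2 ∧ σ p.2 < σ p.1 := by
  simp [inversions]

theorem card_inversions_inv (σ : Perm (Fin n)) : σ⁻¹.inversions.card = σ.inversions.card :=
  Finset.card_nbij' (fun p => (σ⁻¹ p.2, σ⁻¹ p.1)) (fun p => (σ p.2, σ p.1))
    (fun p hp => by simpa [and_comm] using hp) (fun p hp => by simpa [and_comm] using hp)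
    (fun p _ => by simp) (fun p _ => by simp)

theorem inversions_eq_empty_iff {σ : Perm (Fin n)} : σ.inversions = ∅ ↔ StrictMono σ := by
  simp only [Finset.eq_empty_iff_forall_notMem, mem_inversions, not_and, not_lt, Prod.forall]
  exact ⟨fun h p q hpq => (h p q hpq).lt_of_ne (σ.injective.ne hpq.ne),
    fun h p q hpq => (h hpq).le⟩

theorem eq_one_of_inversions_eq_empty {σ : Perm (Fin n)} (h : σ.inversions = ∅) : σ = 1 :=
  Equiv.ext fun _ => (inversions_eq_empty_iff.mp h).apply_eq

theorem exists_adjacent_descent {σ : Perm (Fin n)} (h : σ.inversions.Nonempty) :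
    ∃ a c : Fin n, (a : ℕ) + 1 = c ∧ σ c < σ a := by
  by_contra! hσ
  refine h.ne_empty (inversions_eq_empty_iff.mpr ?_)
  cases n with
  | zero => exact fun p => p.elim0
  | succ n =>
    refine Fin.strictMono_iff_lt_succ.mpr fun i => (hσ _ _ (by simp)).lt_of_ne ?_
    exact σ.injective.ne Fin.castSucc_lt_succ.ne

theorem swap_lt_swap_iff {a c p q : Fin n} (hac : (a : ℕ) + 1 = c) :
    swap a c p < swap a c q ∧ (swap a c p, swap a c q) ≠ (a, c) ↔
      p < q ∧ (p, q) ≠ (a, c) := by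
  simp only [swap_apply_def, ne_eq, Prod.mk.injEq, Fin.lt_def, Fin.ext_iff]
  split_ifs <;> grind

theorem card_inversions_mul_swap_add_one {σ : Perm (Fin n)} {a c : Fin n} (hac : (a : ℕ) + 1 = c)
    (h : σ c < σ a) : (σ * swap a c).inversions.card + 1 = σ.inversions.card := by
  have hlt : a < c := Fin.lt_def.mpr (by omega)
  have hmem : (a, c) ∈ σ.inversions := mem_inversions.mpr ⟨hlt, h⟩
  have hnot : (a, c) ∉ (σ * swap a c).inversions := by
    simp [swap_apply_left, swap_apply_right, h.le]
  have herase : σ.inversions.erase (a, c) = ((σ * swap a c).inversions.erase (a, c)).map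
      ((swap a c).prodCongr (swap a c)).toEmbedding := by
    ext ⟨p, q⟩
    rw [Finset.mem_map_equiv, Finset.mem_erase, Finset.mem_erase, mem_inversions, mem_inversions]
    simp only [prodCongr_symm, symm_swap, prodCongr_apply, Prod.map, Perm.mul_apply,
      swap_apply_self]
    have := swap_lt_swap_iff (p := p) (q := q) hac
    tauto
  rw [← Finset.card_erase_add_one hmem, herase, Finset.card_map,
    Finset.erase_eq_of_notMem hnot]

theorem card_inversions_mul_swap_ne (σ : Perm (Fin n)) {a c : Fin n} (hac : (a : ℕ) + 1 = c) :
    (σ * swap a c).inversions.card ≠ σ.inversions.card := by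
  rcases lt_or_gt_of_ne (σ.injective.ne (Fin.ne_of_val_ne (by omega : (c : ℕ) ≠ a))) with h | h
  · have := card_inversions_mul_swap_add_one hac h
    omega
  · have := card_inversions_mul_swap_add_one hac (σ := σ * swap a c) (by simpa using h)
    rw [mul_assoc, swap_mul_self, mul_one] at this
    omega

end Equiv.Perm

section MonomialGroup

open Matrix

variable {K : Type} [Field K] {n b : ℕ}

theorem monomialUnit_mem_Wset (σ : Equiv.Perm (Fin n)) :
    monomialUnit σ (1 : Fin n → Kˣ) ∈ Wset K n :=
  ⟨σ, fun i j => by simp [val_monomialUnit, monomialMatrix_apply, eq_comm]⟩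

theorem monomialUnit_one_mem_Hbset {f : Fin n → Kˣ} (hf : ∀ j, f j ^ b = 1) :
    monomialUnit 1 f ∈ Hbset K n b := by
  refine ⟨fun i j hij => ?_, fun i => ?_⟩
  · simp [val_monomialUnit, monomialMatrix_apply, hij]
  · simp [val_monomialUnit, monomialMatrix_apply, ← Units.val_pow_eq_pow_val, hf]

theorem monomialUnit_mem_WHbset (σ : Equiv.Perm (Fin n)) {f : Fin n → Kˣ}
    (hf : ∀ j, f j ^ b = 1) : monomialUnit σ f ∈ WHbset K n b :=
  ⟨_, monomialUnit_mem_Wset σ, _, monomialUnit_one_mem_Hbset hf, by simp [monomialUnit_mul]⟩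

theorem exists_eq_monomialUnit_of_mem_Hbset {d : GLn K n} (hd : d ∈ Hbset K n b) :
    ∃ f : Fin n → Kˣ, (∀ j, f j ^ b = 1) ∧ d = monomialUnit 1 f := by
  obtain ⟨hoff, hroot⟩ := hd
  have hdiagonal : (d : Matrix (Fin n) (Fin n) K) =
      diagonal fun i => (d : Matrix (Fin n) (Fin n) K) i i := by
    ext i j
    by_cases h : i = j
    · simp [h]
    · simp [h, hoff i j h]
  have hunit : ∀ i, IsUnit ((d : Matrix (Fin n) (Fin n) K) i i) :=
    Pi.isUnit_iff.mp (isUnit_diagonal.mp (hdiagonal ▸ d.isUnit))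
  refine ⟨fun i => (hunit i).unit, fun i => Units.ext (by simp [hroot]), Units.ext ?_⟩
  rw [val_monomialUnit, monomialMatrix_one_left]
  simpa using hdiagonal

theorem exists_eq_monomialUnit_of_mem_WHbset {x : GLn K n} (hx : x ∈ WHbset K n b) :
    ∃ (σ : Equiv.Perm (Fin n)) (f : Fin n → Kˣ),
      (∀ j, f j ^ b = 1) ∧ x = monomialUnit σ f := by
  obtain ⟨w, ⟨σ, hw⟩, d, hd, rfl⟩ := hx
  obtain ⟨f, hf, rfl⟩ := exists_eq_monomialUnit_of_mem_Hbset hd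
  have hwσ : w = monomialUnit σ 1 :=
    Units.ext <| Matrix.ext fun i j => by simp [hw, val_monomialUnit, monomialMatrix_apply, eq_comm]
  exact ⟨σ, f, hf, by simp [hwσ, monomialUnit_mul]⟩

theorem Hbset_subset_WHbset : Hbset K n b ⊆ WHbset K n b :=
  fun d hd =>
    ⟨1, ⟨1, fun i j => by simp [Matrix.one_apply, eq_comm]⟩, d, hd, (one_mul d).symm⟩

theorem mul_mem_WHbset {x y : GLn K n} (hx : x ∈ WHbset K n b) (hy : y ∈ WHbset K n b) :
    x * y ∈ WHbset K n b := by
  obtain ⟨σ, f, hf, rfl⟩ := exists_eq_monomialUnit_of_mem_WHbset hx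
  obtain ⟨π, g, hg, rfl⟩ := exists_eq_monomialUnit_of_mem_WHbset hy
  rw [monomialUnit_mul]
  exact monomialUnit_mem_WHbset _ fun j => by simp [mul_pow, hf, hg]

theorem inv_mem_WHbset {x : GLn K n} (hx : x ∈ WHbset K n b) : x⁻¹ ∈ WHbset K n b := by
  obtain ⟨σ, f, hf, rfl⟩ := exists_eq_monomialUnit_of_mem_WHbset hx
  rw [monomialUnit_inv]
  exact monomialUnit_mem_WHbset _ fun j => by simp [inv_pow, hf]

theorem mem_Sset_iff {s : GLn K n} :
    s ∈ Sset K n ↔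
      ∃ a c : Fin n, (a : ℕ) + 1 = c ∧ s = monomialUnit (Equiv.swap a c) 1 := by
  refine exists₂_congr fun a c => and_congr_right fun _ => ?_
  rw [Units.ext_iff, ← Matrix.ext_iff]
  simp [val_monomialUnit, monomialMatrix_apply, eq_comm]

theorem mul_self_of_mem_Sset {s : GLn K n} (hs : s ∈ Sset K n) : s * s = 1 := by
  obtain ⟨a, c, -, rfl⟩ := mem_Sset_iff.mp hs
  exact Units.ext <| by simp [monomialUnit_mul, val_monomialUnit, monomialMatrix_one_left]

theorem Sset_subset_WHbset : Sset K n ⊆ WHbset K n b := fun s hs => by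
  obtain ⟨a, c, -, rfl⟩ := mem_Sset_iff.mp hs
  exact monomialUnit_mem_WHbset _ fun _ => one_pow b

theorem Xset_subset_Hbset (t : GLn K n) : Xset K n b t ⊆ Hbset K n b := by
  rintro d ⟨k, l, α, hα, -, -, hd⟩
  refine ⟨fun i j hij => by rw [hd, hmat, diagonal_apply_ne _ hij], fun i => ?_⟩
  rw [hd, hmat, diagonal_apply_eq]
  split_ifs
  · exact hα
  · rw [mul_pow, ← pow_mul, inv_pow, hα, inv_one, mul_one, mul_comm (b - 1),
      (Nat.even_mul_pred_self b).neg_one_pow]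
  · exact one_pow b

end MonomialGroup

section Length

variable {K : Type} [Field K] {n b : ℕ}

theorem len_monomialUnit (σ : Equiv.Perm (Fin n)) (f : Fin n → Kˣ) :
    len (monomialUnit σ f) = σ.inversions.card := by
  have hne : ∀ i j, (monomialUnit σ f : Matrix (Fin n) (Fin n) K) i j ≠ 0 ↔ i = σ j := by
    simp [val_monomialUnit, monomialMatrix_apply]
  rw [len, ← Set.ncard_coe_finset]
  congr 1
  ext p
  simp [hne]

theorem len_inv {x : GLn K n} (hx : x ∈ WHbset K n b) : len x⁻¹ = len x := by
  obtain ⟨σ, f, -, rfl⟩ := exists_eq_monomialUnit_of_mem_WHbset hx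
  rw [monomialUnit_inv, len_monomialUnit, len_monomialUnit, Equiv.Perm.card_inversions_inv]

theorem len_mul_of_mem_Hbset {x d : GLn K n} (hx : x ∈ WHbset K n b) (hd : d ∈ Hbset K n b) :
    len (x * d) = len x := by
  obtain ⟨σ, f, -, rfl⟩ := exists_eq_monomialUnit_of_mem_WHbset hx
  obtain ⟨g, -, rfl⟩ := exists_eq_monomialUnit_of_mem_Hbset hd
  simp only [monomialUnit_mul, len_monomialUnit, mul_one]

theorem len_mul_mul_of_mem_Hbset {x d y : GLn K n} (hx : x ∈ WHbset K n b)
    (hd : d ∈ Hbset K n b) (hy : y ∈ WHbset K n b) : len (x * d * y) = len (x * y) := by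
  obtain ⟨σ, f, -, rfl⟩ := exists_eq_monomialUnit_of_mem_WHbset hx
  obtain ⟨g, -, rfl⟩ := exists_eq_monomialUnit_of_mem_Hbset hd
  obtain ⟨π, h, -, rfl⟩ := exists_eq_monomialUnit_of_mem_WHbset hy
  simp only [monomialUnit_mul, len_monomialUnit, mul_one]

theorem mem_Hbset_of_len_eq_zero {x : GLn K n} (hx : x ∈ WHbset K n b) (h : len x = 0) :
    x ∈ Hbset K n b := by
  obtain ⟨σ, f, hf, rfl⟩ := exists_eq_monomialUnit_of_mem_WHbset hx
  rw [len_monomialUnit, Finset.card_eq_zero] at h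
  rw [Equiv.Perm.eq_one_of_inversions_eq_empty h]
  exact monomialUnit_one_mem_Hbset hf

theorem len_mul_lt_or_lt {x s : GLn K n} (hx : x ∈ WHbset K n b) (hs : s ∈ Sset K n) :
    len (x * s) < len x ∨ len x < len (x * s) := by
  obtain ⟨σ, f, -, rfl⟩ := exists_eq_monomialUnit_of_mem_WHbset hx
  obtain ⟨a, c, hac, rfl⟩ := mem_Sset_iff.mp hs
  rw [monomialUnit_mul, len_monomialUnit, len_monomialUnit]
  exact lt_or_gt_of_ne (σ.card_inversions_mul_swap_ne hac)

theorem exists_len_mul_lt {x : GLn K n} (hx : x ∈ WHbset K n b) (h : len x ≠ 0) :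
    ∃ s ∈ Sset K n, len (x * s) < len x := by
  obtain ⟨σ, f, -, rfl⟩ := exists_eq_monomialUnit_of_mem_WHbset hx
  rw [len_monomialUnit, Finset.card_ne_zero] at h
  obtain ⟨a, c, hac, hdesc⟩ := σ.exists_adjacent_descent h
  refine ⟨_, mem_Sset_iff.mpr ⟨a, c, hac, rfl⟩, ?_⟩
  rw [monomialUnit_mul, len_monomialUnit, len_monomialUnit,
    ← Equiv.Perm.card_inversions_mul_swap_add_one hac hdesc]
  exact Nat.lt_succ_self _

theorem exists_len_mul_lt_left {y : GLn K n} (hy : y ∈ WHbset K n b) (h : len y ≠ 0) :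
    ∃ s ∈ Sset K n, len (s * y) < len y := by
  obtain ⟨s, hs, hlt⟩ := exists_len_mul_lt (inv_mem_WHbset hy) (by rwa [len_inv hy])
  have hsy : s * y = (y⁻¹ * s)⁻¹ := by
    rw [mul_inv_rev, inv_inv, inv_eq_of_mul_eq_one_right (mul_self_of_mem_Sset hs)]
  refine ⟨s, hs, ?_⟩
  rwa [hsy, len_inv (mul_mem_WHbset (inv_mem_WHbset hy) (Sset_subset_WHbset hs)), ← len_inv hy]

theorem mul_ne_inv_of_len_mul_lt {x s y d : GLn K n} (hx : x ∈ WHbset K n b) (hs : s ∈ Sset K n)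
    (hy : y ∈ WHbset K n b) (hd : d ∈ Hbset K n b) (hxs : len (x * s) < len x)
    (hsy : len (s * y) < len y) : x * d ≠ (s * y)⁻¹ := by
  intro h
  have hsWH : s ∈ WHbset K n b := Sset_subset_WHbset hs
  have hy_inv : x * d * s = y⁻¹ := by rw [h, mul_inv_rev, inv_mul_cancel_right]
  refine lt_irrefl (len y) ?_
  calc len y = len (x * d * s) := by rw [hy_inv, len_inv hy]
    _ = len (x * s) := len_mul_mul_of_mem_Hbset hx hd hsWH
    _ < len x := hxs
    _ = len (x * d) := (len_mul_of_mem_Hbset hx hd).symm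
    _ = len (s * y) := by rw [h, len_inv (mul_mem_WHbset hsWH hy)]
    _ < len y := hsy

end Length

section Trace

variable {K : Type} [Field K] {n b : ℕ} {R Hv : Type*} [CommRing R] [Ring Hv] [Algebra R Hv]
  {T : GLn K n → Hv} {τ : Hv →ₗ[R] R}

open scoped Classical in
theorem map_T_mul_T (c : R)
    (hTd : ∀ d ∈ Hbset K n b, ∀ x ∈ WHbset K n b, T x * T d = T (x * d))
    (hTsL : ∀ s ∈ Sset K n, ∀ x ∈ WHbset K n b,
      len x < len (s * x) → T s * T x = T (s * x))
    (hTsR : ∀ s ∈ Sset K n, ∀ x ∈ WHbset K n b,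
      (len x < len (x * s) → T x * T s = T (x * s)) ∧
      (len (x * s) < len x → T x * T s = T (x * s) + c • ∑ᶠ d ∈ Xset K n b s, T (x * d)))
    (hτ : ∀ x ∈ WHbset K n b, τ (T x) = if x = 1 then 1 else 0)
    {x y : GLn K n} (hx : x ∈ WHbset K n b) (hy : y ∈ WHbset K n b) :
    τ (T x * T y) = if x = y⁻¹ then 1 else 0 := by
  induction hN : len y using Nat.strong_induction_on generalizing x y with
  | _ N ih =>
  subst hN
  by_cases h0 : len y = 0
  · rw [hTd y (mem_Hbset_of_len_eq_zero hy h0) x hx, hτ _ (mul_mem_WHbset hx hy)]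
    exact if_congr mul_eq_one_iff_eq_inv rfl rfl
  obtain ⟨s, hs, hsy⟩ := exists_len_mul_lt_left hy h0
  have hsWH : s ∈ WHbset K n b := Sset_subset_WHbset hs
  have hy' : s * y ∈ WHbset K n b := mul_mem_WHbset hsWH hy
  have hss : s * s = 1 := mul_self_of_mem_Sset hs
  have hTy : T y = T s * T (s * y) := by
    rw [hTsL s hs _ hy' (by rwa [← mul_assoc, hss, one_mul]), ← mul_assoc, hss, one_mul]
  have hIH : τ (T (x * s) * T (s * y)) = if x = y⁻¹ then 1 else 0 := by
    rw [ih _ hsy (mul_mem_WHbset hx hsWH) hy' rfl]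
    refine if_congr ?_ rfl rfl
    rw [mul_inv_rev, inv_eq_of_mul_eq_one_right hss, mul_left_inj]
  rw [hTy, ← mul_assoc]
  rcases len_mul_lt_or_lt hx hs with hxs | hxs
  · have hX : τ ((∑ᶠ d ∈ Xset K n b s, T (x * d)) * T (s * y)) = 0 := by
      refine finsum_mem_induction (fun h => τ (h * T (s * y)) = 0) (by simp)
        (fun h h' hh hh' => by rw [add_mul, map_add, hh, hh', add_zero]) fun d hd => ?_
      have hdH := Xset_subset_Hbset s hd
      rw [ih _ hsy (mul_mem_WHbset hx (Hbset_subset_WHbset hdH)) hy' rfl,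
        if_neg (mul_ne_inv_of_len_mul_lt hx hs hy hdH hxs hsy)]
    rw [(hTsR s hs x hx).2 hxs, add_mul, map_add, smul_mul_assoc, map_smul, hX, smul_zero,
      add_zero, hIH]
  · rw [(hTsR s hs x hx).1 hxs, hIH]

end Trace

open scoped Classical in
theorem tau_symmetrizing_trace (n b : ℕ)
    (Hv : Type) [Ring Hv] [Algebra Av Hv]
    (T : GLn ℂ n → Hv)
    (bv : Module.Basis ↥(WHbset ℂ n b) Av Hv)
    (hbv : ∀ x : ↥(WHbset ℂ n b), bv x = T ↑x)
    (hTd : ∀ d ∈ Hbset ℂ n b, ∀ x ∈ WHbset ℂ n b,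
      T d * T x = T (d * x) ∧ T x * T d = T (x * d))
    (hTsL : ∀ s ∈ Sset ℂ n, ∀ x ∈ WHbset ℂ n b,
      (len x < len (s * x) → T s * T x = T (s * x)) ∧
      (len (s * x) < len x →
        T s * T x = T (s * x) + (aA * vI) • ∑ᶠ d ∈ Xset ℂ n b s, T (d * x)))
    (hTsR : ∀ s ∈ Sset ℂ n, ∀ x ∈ WHbset ℂ n b,
      (len x < len (x * s) → T x * T s = T (x * s)) ∧
      (len (x * s) < len x →
        T x * T s = T (x * s) + (aA * vI) • ∑ᶠ d ∈ Xset ℂ n b s, T (x * d)))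
    (τ : Hv →ₗ[Av] Av)
    (hτ : ∀ x ∈ WHbset ℂ n b, τ (T x) = if x = 1 then 1 else 0) :
    (∀ x ∈ WHbset ℂ n b, ∀ y ∈ WHbset ℂ n b,
      τ (T x * T y) = if x = y⁻¹ then 1 else 0) ∧
    (∀ h h' : Hv, τ (h * h') = τ (h' * h)) ∧
    (∀ h : Hv, (∀ h' : Hv, τ (h * h') = 0) → h = 0) ∧
    (∀ h : Hv, (∀ h' : Hv, τ (h' * h) = 0) → h = 0) := by
  have hmul : ∀ x ∈ WHbset ℂ n b, ∀ y ∈ WHbset ℂ n b,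
      τ (T x * T y) = if x = y⁻¹ then 1 else 0 := fun x hx y hy =>
    map_T_mul_T (aA * vI) (fun d hd x hx => (hTd d hd x hx).2)
      (fun s hs x hx => (hTsL s hs x hx).1) hTsR hτ hx hy
  let e : WHbset ℂ n b → WHbset ℂ n b := fun y => ⟨y⁻¹, inv_mem_WHbset y.2⟩
  have he : Function.Involutive e := fun y => Subtype.ext (inv_inv (y : GLn ℂ n))
  have hdual : ∀ x y, τ (bv x * bv y) = if x = e y then 1 else 0 := fun x y => by
    rw [hbv, hbv, hmul x x.2 y y.2]
    exact if_congr (Subtype.coe_inj (a := x) (b := e y)) rfl rfl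
  have hcomm := map_mul_comm_of_basis_dual bv τ he hdual
  have hnondeg := fun h => eq_zero_of_map_mul_eq_zero_of_basis_dual bv τ he hdual (x := h)
  exact ⟨hmul, hcomm, hnondeg, fun h hh => hnondeg h fun h' => (hcomm h h').trans (hh h')⟩
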